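/- arXiv:0909.1598 — 4 statements merged into one kernel-verified Lean document; each statement's English description precedes it below -/
import Mathlib

section
/- Let ε > 0, n ≥ 1 an integer, and M > 0. There exists δ > 0 such that: for any finite subset F ⊂ Mₙ(ℂ) with ‖a‖ ≤ M for all a ∈ F and any unitary u ∈ Mₙ(ℂ) satisfying ‖ua − au‖ < δ for all a ∈ F, there exists a continuous path of unitaries {u(t) : t ∈ [0,1]} in Mₙ(ℂ) with u(0) = u, u(1) = 1, and ‖u(t)a − au(t)‖ < ε for all a ∈ F and all t ∈ [0,1]. -/
/-!
A unitary `v` whose spectrum misses a point of the circle has a continuous logarithm `i θ` on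
its spectrum, so `t ↦ exp (i (1 - t) θ(v))` joins `v` to `1` inside `C*(v)`. The elements `w`
with `‖w a - a w‖ → 0` as `‖v a - a v‖ → 0`, uniformly over `‖a‖ ≤ M`, form a closed
*-subalgebra (closed under `star` because `‖v a* - a* v‖ = ‖v a - a v‖` for unitary `v`), hence
contain `C*(v)`; compactness of the path makes the estimate uniform along it. A unitary `u`
near `v` is joined to `v` by the short path `exp (t log (v u*)) u`, which changes commutators
with `a` by at most `2 ‖u - v‖ M`. In `Mₙ(ℂ)` every spectrum is finite and the unitary group
is compact, so finitely many of these neighbourhoods give a uniform `δ`.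
-/

open scoped Matrix.Norms.L2Operator

open Filter Topology Metric

section NormedRing

variable {A : Type*} [NormedRing A]

theorem norm_commutator_le_of_norm_sub_le {w w' a : A} {η M : ℝ} (hw : ‖w - w'‖ ≤ η)
    (ha : ‖a‖ ≤ M) : ‖w * a - a * w‖ ≤ ‖w' * a - a * w'‖ + 2 * η * M := by
  have hwa : ‖w - w'‖ * ‖a‖ ≤ η * M :=
    mul_le_mul hw ha (norm_nonneg _) ((norm_nonneg _).trans hw)
  calc ‖w * a - a * w‖ = ‖(w' * a - a * w') + ((w - w') * a - a * (w - w'))‖ := by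
        congr 1; noncomm_ring
    _ ≤ ‖w' * a - a * w'‖ + (‖w - w'‖ * ‖a‖ + ‖a‖ * ‖w - w'‖) :=
        (norm_add_le _ _).trans <| add_le_add_right
          ((norm_sub_le _ _).trans (add_le_add (norm_mul_le _ _) (norm_mul_le _ _))) _
    _ ≤ ‖w' * a - a * w'‖ + 2 * η * M := by linarith [mul_comm ‖a‖ ‖w - w'‖]

variable {l : Filter A} {M : ℝ}

theorem isClosed_setOf_tendsto_commutator (hl : ∀ᶠ a in l, ‖a‖ ≤ M) :
    IsClosed {w : A | Tendsto (fun a => w * a - a * w) l (𝓝 0)} := by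
  refine isClosed_of_closure_subset fun w hw => Metric.tendsto_nhds.mpr fun ε hε => ?_
  obtain ⟨η, hη, hηM⟩ := exists_pos_mul_lt (half_pos hε) (2 * M)
  obtain ⟨w', hw', hww'⟩ := Metric.mem_closure_iff.mp hw η hη
  filter_upwards [Metric.tendsto_nhds.mp hw' _ (half_pos hε), hl] with a hw'a ha
  rw [dist_zero_right] at hw'a ⊢
  have := norm_commutator_le_of_norm_sub_le (η := η) (by rw [← dist_eq_norm]; exact hww'.le) ha
  linarith

theorem IsCompact.eventually_forall_norm_commutator_lt {K : Set A} (hK : IsCompact K)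
    (hl : ∀ᶠ a in l, ‖a‖ ≤ M) (hKl : ∀ w ∈ K, Tendsto (fun a => w * a - a * w) l (𝓝 0))
    {ε : ℝ} (hε : 0 < ε) : ∀ᶠ a in l, ∀ w ∈ K, ‖w * a - a * w‖ < ε := by
  obtain ⟨η, hη, hηM⟩ := exists_pos_mul_lt (half_pos hε) (2 * M)
  have hloc : ∀ w₀ ∈ K, ∀ᶠ p in l ×ˢ 𝓝 w₀, ‖p.2 * p.1 - p.1 * p.2‖ < ε := by
    intro w₀ hw₀
    have hw₀a := (Metric.tendsto_nhds.mp (hKl w₀ hw₀) _ (half_pos hε)).and hl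
    filter_upwards [hw₀a.prod_mk (ball_mem_nhds w₀ hη)] with p ⟨⟨hw₀a, ha⟩, hw⟩
    rw [dist_zero_right] at hw₀a
    have := norm_commutator_le_of_norm_sub_le (η := η)
      (by rw [← dist_eq_norm]; exact (mem_ball.mp hw).le) ha
    linarith
  have : ∀ᶠ p in l ×ˢ 𝓝ˢ K, ‖p.2 * p.1 - p.1 * p.2‖ < ε := hK.mem_prod_nhdsSet_of_forall hloc
  exact this.curry.mono fun _ h => h.self_of_nhdsSet

end NormedRing

theorem IsCompact.exists_pos_forall_of_antitone {X : Type*} [TopologicalSpace X] {K : Set X}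
    (hK : IsCompact K) {P : ℝ → X → Prop} (hP : ∀ x, Antitone fun δ => P δ x)
    (h : ∀ x ∈ K, ∃ δ > 0, ∀ᶠ y in 𝓝 x, P δ y) : ∃ δ > 0, ∀ x ∈ K, P δ x := by
  refine hK.induction_on ⟨1, one_pos, by simp⟩
    (fun s t hst ⟨δ, hδ, ht⟩ => ⟨δ, hδ, fun x hx => ht x (hst hx)⟩) ?_ fun x hx => ?_
  · rintro s t ⟨δ, hδ, hs⟩ ⟨δ', hδ', ht⟩
    refine ⟨min δ δ', lt_min hδ hδ', fun x hx => hx.elim ?_ ?_⟩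
    · exact fun hx => hP x (min_le_left δ δ') (hs x hx)
    · exact fun hx => hP x (min_le_right δ δ') (ht x hx)
  · obtain ⟨δ, hδ, hx⟩ := h x hx
    exact ⟨{y | P δ y}, mem_nhdsWithin_of_mem_nhds hx, δ, hδ, fun _ hy => hy⟩

namespace Complex

theorem exists_norm_eq_one_notMem_of_finite {s : Set ℂ} (hs : s.Finite) :
    ∃ c : ℂ, ‖c‖ = 1 ∧ c ∉ s := by
  have hinf : (sphere (0 : ℂ) 1).Infinite :=
    (isPreconnected_sphere (by simp) 0 1).infinite_of_nontrivial
      ⟨1, by simp, -1, by simp, by norm_num⟩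
  obtain ⟨c, hc, hcs⟩ := (hinf.sdiff hs).nonempty
  exact ⟨c, mem_sphere_zero_iff_norm.mp hc, hcs⟩

theorem exists_continuousOn_sphere_diff_exp_mul_I_eq {c : ℂ} (hc : ‖c‖ = 1) :
    ∃ θ : ℂ → ℝ, ContinuousOn θ (sphere 0 1 \ {c}) ∧
      ∀ z ∈ sphere (0 : ℂ) 1, exp (θ z * I) = z := by
  have hcc : (starRingEnd ℂ) c * c = 1 := by
    rw [mul_comm, mul_conj, normSq_eq_norm_sq, hc]; norm_num
  have hexp : ∀ w : ℂ, ‖w‖ = 1 → exp (arg w * I) = w := fun w hw => by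
    simpa [hw] using norm_mul_exp_arg_mul_I w
  -- rotate the branch cut of `arg` from `-1` to `c`
  refine ⟨fun z => arg (-(starRingEnd ℂ) c * z) + arg (-c), ?_, fun z hz => ?_⟩
  · refine ContinuousOn.add (fun z hz => ContinuousAt.continuousWithinAt ?_) continuousOn_const
    refine (continuousAt_arg ?_).comp (continuousAt_const.mul continuousAt_id)
    have hz1 : ‖-(starRingEnd ℂ) c * z‖ = 1 := by simp [hc, mem_sphere_zero_iff_norm.mp hz.1]
    have hne : -(starRingEnd ℂ) c * z ≠ -1 := fun h =>
      hz.2 <| Set.mem_singleton_iff.2 <| by linear_combination -c * h - z * hcc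
    exact Set.singleton_subset_iff.mp <|
      (subset_slitPlane_iff_of_subset_sphere (by simpa using hz1)).2 (by simpa [eq_comm] using hne)
  · have hz1 := mem_sphere_zero_iff_norm.mp hz
    push_cast
    rw [add_mul, exp_add, hexp _ (by simp [hc, hz1]), hexp _ (by simp [hc])]
    linear_combination z * hcc

end Complex

section CStarAlgebra

variable {A : Type*} [CStarAlgebra A]

def almostCommutant (v : A) (M : ℝ) : Filter A :=
  comap (fun a => v * a - a * v) (𝓝 0) ⊓ 𝓟 (closedBall 0 M)

theorem eventually_almostCommutant_iff {v : A} {M : ℝ} {p : A → Prop} :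
    (∀ᶠ a in almostCommutant v M, p a) ↔
      ∃ δ > 0, ∀ a, ‖a‖ ≤ M → ‖v * a - a * v‖ < δ → p a := by
  simp only [almostCommutant, ((nhds_basis_ball.comap _).inf_principal _).eventually_iff,
    Set.mem_inter_iff, Set.mem_preimage, mem_ball, dist_zero_right, mem_closedBall]
  exact exists_congr fun δ => and_congr_right fun _ =>
    ⟨fun h a ha hva => h ⟨hva, ha⟩, fun h a ha => h a ha.2 ha.1⟩

theorem eventually_norm_le_almostCommutant (v : A) (M : ℝ) :
    ∀ᶠ a in almostCommutant v M, ‖a‖ ≤ M :=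
  (eventually_principal.2 fun a ha => by simpa using ha).filter_mono inf_le_right

theorem tendsto_commutator_almostCommutant (v : A) (M : ℝ) :
    Tendsto (fun a => v * a - a * v) (almostCommutant v M) (𝓝 0) :=
  tendsto_comap.mono_left inf_le_left

theorem tendsto_star_almostCommutant (v : unitary A) (M : ℝ) :
    Tendsto star (almostCommutant (v : A) M) (almostCommutant (v : A) M) := by
  refine tendsto_inf.2 ⟨tendsto_comap_iff.2 ?_, tendsto_principal.2 ?_⟩
  · have key : ∀ a : A, (v : A) * star a - star a * v =
        star (star (v : A) * ((v : A) * a - a * v) * star (v : A)) := fun a => by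
      simp only [star_mul, star_sub, star_star, mul_sub, sub_mul, mul_assoc,
        Unitary.star_mul_self_of_mem v.2, mul_one]
      simp only [← mul_assoc, Unitary.mul_star_self_of_mem v.2, one_mul]
    have hcont : Continuous fun x : A => star (star (v : A) * x * star (v : A)) := by fun_prop
    simpa [Function.comp_def, key] using
      (hcont.tendsto' 0 0 (by simp)).comp (tendsto_commutator_almostCommutant (v : A) M)
  · filter_upwards [eventually_norm_le_almostCommutant (v : A) M] with a ha
    simpa using ha

def asymptoticCommutant (v : unitary A) (M : ℝ) : StarSubalgebra ℂ A where
  carrier := {w | Tendsto (fun a => w * a - a * w) (almostCommutant (v : A) M) (𝓝 0)}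
  mul_mem' {x y} hx hy := by
    simpa [mul_sub, sub_mul, mul_assoc] using (hy.const_mul x).add (hx.mul_const y)
  add_mem' {x y} hx hy := by
    simpa [add_mul, mul_add, add_sub_add_comm] using hx.add hy
  algebraMap_mem' c := by simpa [Algebra.commutes] using tendsto_const_nhds
  star_mem' {w} hw := by
    simpa [Function.comp_def] using (hw.comp (tendsto_star_almostCommutant v M)).star.neg

theorem elemental_le_asymptoticCommutant (v : unitary A) (M : ℝ) :
    StarAlgebra.elemental ℂ (v : A) ≤ asymptoticCommutant v M :=
  StarAlgebra.elemental.le_of_mem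
    (isClosed_setOf_tendsto_commutator (eventually_norm_le_almostCommutant _ M))
    (tendsto_commutator_almostCommutant _ M)

open Complex in
theorem exists_path_one_forall_mem_elemental (v : unitary A) {θ : ℂ → ℝ}
    (hθ : ContinuousOn θ (spectrum ℂ (v : A)))
    (hexp : ∀ z ∈ spectrum ℂ (v : A), exp (θ z * I) = z) :
    ∃ γ : Path v 1, ∀ t, (γ t : A) ∈ StarAlgebra.elemental ℂ (v : A) := by
  let x : selfAdjoint A := ⟨cfc (fun z => (θ z : ℂ)) (v : A), by
    rw [selfAdjoint.mem_iff, ← cfc_star]; simp⟩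
  have hxs : ∀ s : ℝ, (selfAdjoint.expUnitary (s • x) : A) =
      cfc (fun z => exp ((s * θ z : ℝ) * I)) (v : A) := fun s => by
    rw [selfAdjoint.expUnitary_coe, ← CFC.exp_eq_normedSpace_exp (𝕜 := ℂ)]
    simp only [selfAdjoint.val_smul]
    rw [← cfc_smul .., ← cfc_smul .., ← cfc_comp' ..]
    refine cfc_congr fun z hz => ?_
    simp [← exp_eq_exp_ℂ, mul_comm]
  have hx : selfAdjoint.expUnitary x = v := by
    ext
    rw [← one_smul ℝ x, hxs]
    conv_rhs => rw [← cfc_id' ℂ (v : A)]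
    exact cfc_congr fun z hz => by simpa using hexp z hz
  refine ⟨(selfAdjoint.expUnitaryPathToOne x).symm.cast hx.symm rfl, fun t => ?_⟩
  simp only [Path.cast_coe, Path.symm_apply, Function.comp_apply,
    selfAdjoint.expUnitaryPathToOne_apply, hxs]
  exact cfc_mem_elemental _ _

theorem exists_path_one_eventually_norm_commutator_lt (v : unitary A) {θ : ℂ → ℝ}
    (hθ : ContinuousOn θ (spectrum ℂ (v : A)))
    (hexp : ∀ z ∈ spectrum ℂ (v : A), Complex.exp (θ z * Complex.I) = z) (M : ℝ) {ε : ℝ}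
    (hε : 0 < ε) :
    ∃ γ : Path v 1, ∀ᶠ a in almostCommutant (v : A) M, ∀ t, ‖(γ t : A) * a - a * γ t‖ < ε := by
  obtain ⟨γ, hγ⟩ := exists_path_one_forall_mem_elemental v hθ hexp
  have hK : IsCompact (Set.range fun t => (γ t : A)) :=
    isCompact_range (continuous_subtype_val.comp γ.continuous)
  refine ⟨γ, (hK.eventually_forall_norm_commutator_lt (eventually_norm_le_almostCommutant _ M)
    (Set.forall_mem_range.2 fun t => elemental_le_asymptoticCommutant v M (hγ t)) hε).mono
    fun a h t => h _ ⟨t, rfl⟩⟩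

theorem Unitary.norm_path_sub_le (u v : unitary A) (huv : ‖(v - u : A)‖ < 2)
    (t : unitInterval) : ‖(Unitary.path u v huv t - u : A)‖ ≤ ‖(v - u : A)‖ := by
  rw [Unitary.path_apply, Submonoid.coe_mul, ← sub_one_mul, CStarRing.norm_mul_mem_unitary _ u.2,
    Unitary.norm_sub_eq v u]
  exact Unitary.norm_expUnitary_smul_argSelfAdjoint_sub_one_le _ t.2
    (Unitary.norm_sub_eq v u ▸ huv)

theorem isCompact_unitary [ProperSpace A] : IsCompact (unitary A : Set A) :=
  (isCompact_closedBall 0 1).of_isClosed_subset isClosed_unitary fun u hu => by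
    rcases subsingleton_or_nontrivial A with _ | _
    · simp [Subsingleton.elim u 0]
    · simp [CStarRing.norm_of_mem_unitary hu]

def HasControlledPathToOne (M δ ε : ℝ) (u : unitary A) : Prop :=
  ∃ γ : Path u 1, ∀ a : A, ‖a‖ ≤ M → ‖(u : A) * a - a * u‖ < δ →
    ∀ t, ‖(γ t : A) * a - a * γ t‖ < ε

theorem HasControlledPathToOne.antitone (M ε : ℝ) (u : unitary A) :
    Antitone fun δ => HasControlledPathToOne M δ ε u :=
  fun _ _ hδ ⟨γ, hγ⟩ => ⟨γ, fun a ha hua => hγ a ha (hua.trans_le hδ)⟩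

theorem exists_pos_eventually_hasControlledPathToOne (v : unitary A) {c : ℂ} (hc : ‖c‖ = 1)
    (hcv : c ∉ spectrum ℂ (v : A)) (M : ℝ) {ε : ℝ} (hε : 0 < ε) :
    ∃ δ > 0, ∀ᶠ u in 𝓝 v, HasControlledPathToOne M δ ε u := by
  obtain ⟨θ, hθ, hexp⟩ := Complex.exists_continuousOn_sphere_diff_exp_mul_I_eq hc
  have hσ : spectrum ℂ (v : A) ⊆ sphere 0 1 \ {c} := fun z hz =>
    ⟨spectrum.subset_circle_of_unitary v.2 hz, fun h => hcv (Set.mem_singleton_iff.1 h ▸ hz)⟩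
  obtain ⟨γ, hγ⟩ := exists_path_one_eventually_norm_commutator_lt v (hθ.mono hσ)
    (fun z hz => hexp z (hσ hz).1) M (half_pos hε)
  obtain ⟨δ₀, hδ₀, hγδ₀⟩ := eventually_almostCommutant_iff.1 hγ
  have hδ : 0 < min (δ₀ / 2) (ε / 2) := lt_min (half_pos hδ₀) (half_pos hε)
  obtain ⟨η, hη, hηM⟩ := exists_pos_mul_lt hδ (2 * M)
  refine ⟨_, hδ, ?_⟩
  filter_upwards [ball_mem_nhds v (lt_min hη two_pos)] with u hu
  have huv : ‖(v - u : A)‖ < min η 2 := by rwa [mem_ball', Subtype.dist_eq, dist_eq_norm] at hu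
  have huv₂ : ‖(v - u : A)‖ < 2 := huv.trans_le (min_le_right _ _)
  refine ⟨(Unitary.path u v huv₂).trans γ, fun a ha hua t => ?_⟩
  have hva : ‖(v : A) * a - a * v‖ < δ₀ := by
    have := norm_commutator_le_of_norm_sub_le (huv.le.trans (min_le_left _ _)) ha
    linarith [min_le_left (δ₀ / 2) (ε / 2)]
  rcases (Path.trans_range (Unitary.path u v huv₂) γ).subset ⟨t, rfl⟩ with ⟨s, hs⟩ | ⟨s, hs⟩
  · rw [← hs]
    have := norm_commutator_le_of_norm_sub_le (η := η)
      ((Unitary.norm_path_sub_le u v huv₂ s).trans (huv.le.trans (min_le_left _ _))) ha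
    linarith [min_le_right (δ₀ / 2) (ε / 2)]
  · rw [← hs]
    exact (hγδ₀ a ha hva s).trans (half_lt_self hε)

theorem IsCompact.exists_pos_forall_hasControlledPathToOne {K : Set (unitary A)}
    (hK : IsCompact K) (hgap : ∀ u ∈ K, ∃ c : ℂ, ‖c‖ = 1 ∧ c ∉ spectrum ℂ (u : A)) (M : ℝ)
    {ε : ℝ} (hε : 0 < ε) : ∃ δ > 0, ∀ u ∈ K, HasControlledPathToOne M δ ε u :=
  hK.exists_pos_forall_of_antitone (HasControlledPathToOne.antitone M ε) fun v hv =>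
    let ⟨_, hc, hcv⟩ := hgap v hv
    exists_pos_eventually_hasControlledPathToOne v hc hcv M hε

end CStarAlgebra

theorem exists_path_of_unitaries_almost_commuting_general
    (ε : ℝ) (hε : 0 < ε) (n : ℕ) (M : ℝ) :
    ∃ δ > 0, ∀ F : Finset (Matrix (Fin n) (Fin n) ℂ), (∀ a ∈ F, ‖a‖ ≤ M) →
      ∀ u : Matrix (Fin n) (Fin n) ℂ, u ∈ unitary (Matrix (Fin n) (Fin n) ℂ) →
      (∀ a ∈ F, ‖u * a - a * u‖ < δ) →
      ∃ U : ℝ → Matrix (Fin n) (Fin n) ℂ, ContinuousOn U (Set.Icc 0 1) ∧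
        (∀ t ∈ Set.Icc (0:ℝ) 1, U t ∈ unitary (Matrix (Fin n) (Fin n) ℂ)) ∧
        U 0 = u ∧ U 1 = 1 ∧
        ∀ t ∈ Set.Icc (0:ℝ) 1, ∀ a ∈ F, ‖U t * a - a * U t‖ < ε := by
  have hK : IsCompact (Set.univ : Set (unitary (Matrix (Fin n) (Fin n) ℂ))) :=
    Subtype.isCompact_iff.2 (by simpa using isCompact_unitary)
  obtain ⟨δ, hδ, hpath⟩ := hK.exists_pos_forall_hasControlledPathToOne
    (fun u _ => Complex.exists_norm_eq_one_notMem_of_finite (Matrix.finite_spectrum _)) M hε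
  refine ⟨δ, hδ, fun F hF u hu hFu => ?_⟩
  obtain ⟨γ, hγ⟩ := hpath ⟨u, hu⟩ trivial
  refine ⟨fun t => γ.extend t, (continuous_subtype_val.comp γ.continuous_extend).continuousOn,
    fun t _ => (γ.extend t).2, by simp, by simp, fun t ht a ha => ?_⟩
  simpa only [γ.extend_apply ht] using hγ a (hF a ha) (hFu a ha) ⟨t, ht⟩

/-- Almost-commuting unitaries can be connected to the identity through a path of
unitaries which almost commute with the given finite set (Lemma `frombk`). -/
theorem exists_path_of_unitaries_almost_commuting
    (ε : ℝ) (hε : 0 < ε) (n : ℕ) (hn : 1 ≤ n) (M : ℝ) (hM : 0 < M) :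
    ∃ δ > 0, ∀ F : Finset (Matrix (Fin n) (Fin n) ℂ), (∀ a ∈ F, ‖a‖ ≤ M) →
      ∀ u : Matrix (Fin n) (Fin n) ℂ, u ∈ unitary (Matrix (Fin n) (Fin n) ℂ) →
      (∀ a ∈ F, ‖u * a - a * u‖ < δ) →
      ∃ U : ℝ → Matrix (Fin n) (Fin n) ℂ, ContinuousOn U (Set.Icc 0 1) ∧
        (∀ t ∈ Set.Icc (0:ℝ) 1, U t ∈ unitary (Matrix (Fin n) (Fin n) ℂ)) ∧
        U 0 = u ∧ U 1 = 1 ∧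
        ∀ t ∈ Set.Icc (0:ℝ) 1, ∀ a ∈ F, ‖U t * a - a * U t‖ < ε :=
  exists_path_of_unitaries_almost_commuting_general ε hε n M
end

section
/- Let X be a compact metric space, n ≥ 1 an integer, and tr the normalized trace on Mₙ(ℂ). For every ε > 0 and every finite set F ⊂ C(X), there exist δ > 0 and a finite set G ⊂ C(X) such that: whenever φ, ψ : C(X) → Mₙ(ℂ) are unital *-homomorphisms with |tr(φ(g)) − tr(ψ(g))| < δ for all g ∈ G, there exists a unitary u ∈ Mₙ(ℂ) with ‖u*φ(f)u − ψ(f)‖ < ε for all f ∈ F. -/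
/-!
The matrices `φ f` commute and are normal, so one unitary diagonalises all of them; each diagonal
entry is then a character of `C(X)`, i.e. a point evaluation, and `φ` is unitarily equivalent to
`f ↦ diag (f x₁, …, f xₙ)`. Fix a finite `r/3`-net `s` of `X` and, for each `T ⊆ s`, a Urysohn
function equal to `1` near `T` and to `0` away from it. Its trace under `φ` bounds from below the
number of points `xᵢ` near `T`, and under `ψ` bounds from above the number of points `yⱼ` a little
further from `T`; so if these traces almost agree, Hall's condition holds and a permutation `σ`
brings each `xᵢ` within `r` of `y_{σ i}`. Conjugating by the correspondingly permuted unitaries,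
`φ f` and `ψ f` then differ by `diag (f xᵢ - f y_{σ i})`, which is small by uniform continuity.
-/

open scoped Matrix.Norms.L2Operator
open Matrix Finset Function WithLp Metric

theorem LinearMap.IsSymmetric.exists_orthonormalBasis_forall_apply_eq_smul
    {𝕜 E ι m : Type*} [RCLike 𝕜] [NormedAddCommGroup E] [InnerProductSpace 𝕜 E]
    [FiniteDimensional 𝕜 E] [Fintype m] {T : ι → Module.End 𝕜 E}
    (hT : ∀ i, (T i).IsSymmetric) (hC : Pairwise (Commute on T))
    (hm : Module.finrank 𝕜 E = Fintype.card m) :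
    ∃ b : OrthonormalBasis m 𝕜 E, ∃ χ : m → ι → 𝕜, ∀ k i, T i (b k) = χ k i • b k := by
  classical
  -- The joint eigenspaces are indexed by the possibly infinite type `ι → 𝕜`; the collected index
  -- type is nevertheless finite, since it indexes a basis of `E`.
  have hV := directSum_isInternal_of_pairwise_commute hT hC
  have hV' := orthogonalFamily_iInf_eigenspaces hT
  let b := hV.collectedBasis fun χ => (stdOrthonormalBasis 𝕜 _).toBasis
  have hb : Orthonormal 𝕜 b := by
    simpa [b] using hV'.orthonormal_sigma_orthonormal
      (show ∀ χ, Orthonormal 𝕜 (stdOrthonormalBasis 𝕜 _).toBasis by simp)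
  have := FiniteDimensional.fintypeBasisIndex b
  let e := Fintype.equivOfCardEq ((Module.finrank_eq_card_basis b).symm.trans hm)
  refine ⟨(b.toOrthonormalBasis hb).reindex e, fun k => (e.symm k).1, fun k i => ?_⟩
  have := (Submodule.mem_iInf _).1
    (hV.collectedBasis_mem (fun χ => (stdOrthonormalBasis 𝕜 _).toBasis) (e.symm k)) i
  rw [OrthonormalBasis.reindex_apply, Module.Basis.coe_toOrthonormalBasis]
  exact Module.End.mem_eigenspace_iff.1 this

theorem Matrix.exists_unitary_forall_star_mul_mul_eq_diagonal
    {𝕜 m ι : Type*} [RCLike 𝕜] [Fintype m] [DecidableEq m]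
    {A : ι → Matrix m m 𝕜} (hA : ∀ i, (A i).IsHermitian) (hC : Pairwise (Commute on A)) :
    ∃ U ∈ unitary (Matrix m m 𝕜), ∃ d : ι → m → 𝕜, ∀ i, star U * A i * U = diagonal (d i) := by
  obtain ⟨b, χ, hb⟩ := LinearMap.IsSymmetric.exists_orthonormalBasis_forall_apply_eq_smul
    (fun i => isSymmetric_toEuclideanLin_iff.2 (hA i))
    (fun i j hij => (hC hij).map (toLpLinAlgEquiv 2)) finrank_euclideanSpace
  set U := (EuclideanSpace.basisFun m 𝕜).toBasis.toMatrix b.toBasis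
  have hU : U ∈ unitary (Matrix m m 𝕜) :=
    (EuclideanSpace.basisFun m 𝕜).toMatrix_orthonormalBasis_mem_unitary b
  refine ⟨U, hU, fun i k => χ k i, fun i => ?_⟩
  have hAU : A i * U = U * diagonal (fun k => χ k i) := by
    ext j k
    have := congr(ofLp $(hb k i) j)
    have hU_apply : ∀ j k, U j k = b k j := fun j k => by simp [U, Module.Basis.toMatrix_apply]
    simp only [toLpLin_apply, PiLp.toLp_apply, PiLp.smul_apply, smul_eq_mul] at this
    rw [mul_diagonal, hU_apply, mul_comm, ← this]
    simp only [mul_apply, hU_apply, mulVec, dotProduct]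
  rw [mul_assoc, hAU, ← mul_assoc, hU.1, one_mul]

def AlgHom.diagOfIsDiag {R A m : Type*} [CommSemiring R] [Semiring A] [Algebra R A] [Fintype m]
    [DecidableEq m] (ρ : A →ₐ[R] Matrix m m R) (hρ : ∀ a, (ρ a).IsDiag) : A →ₐ[R] m → R where
  toFun a := (ρ a).diag
  map_one' := by simp
  map_mul' a b := calc
    (ρ (a * b)).diag = (diagonal (ρ a).diag * diagonal (ρ b).diag).diag := by
      rw [(hρ a).diagonal_diag, (hρ b).diagonal_diag, map_mul]
    _ = (ρ a).diag * (ρ b).diag := by rw [diagonal_mul_diagonal, diag_diagonal]; rfl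
  map_zero' := by simp
  map_add' := by simp
  commutes' r := by simp [algebraMap_eq_diagonal]

theorem ContinuousMap.exists_apply_eq_of_algHom {X 𝕜 : Type*} [TopologicalSpace X]
    [CompactSpace X] [T2Space X] [RCLike 𝕜] (Λ : C(X, 𝕜) →ₐ[𝕜] 𝕜) : ∃ x, ∀ f, Λ f = f x := by
  obtain ⟨x, hx⟩ := (WeakDual.CharacterSpace.continuousMapEval_bijective X 𝕜).2
    (WeakDual.CharacterSpace.equivAlgHom.symm Λ)
  exact ⟨x, fun f => congr($hx.symm f)⟩

theorem StarAlgHom.exists_unitary_eq_conj_diagonal {X m : Type*} [TopologicalSpace X]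
    [CompactSpace X] [T2Space X] [Fintype m] [DecidableEq m]
    (φ : C(X, ℂ) →⋆ₐ[ℂ] Matrix m m ℂ) :
    ∃ U ∈ unitary (Matrix m m ℂ), ∃ x : m → X,
      ∀ f, φ f = U * diagonal (fun k => f (x k)) * star U := by
  obtain ⟨U, hU, d, hd⟩ := exists_unitary_forall_star_mul_mul_eq_diagonal
    (A := fun a : selfAdjoint C(X, ℂ) => φ a) (fun a => (a.2.map φ).isHermitian)
    (fun a b _ => ((Commute.all (a : C(X, ℂ)) b).map φ))
  let ρ := ((Unitary.conjStarAlgAut ℂ _ (star ⟨U, hU⟩)).toStarAlgHom.comp φ).toAlgHom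
  have hρ_apply (f) : ρ f = star U * φ f * U := Unitary.conjStarAlgAut_star_apply (S := ℂ) _ _
  have hρ (f) : (ρ f).IsDiag := by
    rw [← realPart_add_I_smul_imaginaryPart f, map_add, map_smul, hρ_apply, hρ_apply, hd, hd]
    exact (isDiag_diagonal _).add ((isDiag_diagonal _).smul _)
  choose x hx using fun k =>
    ContinuousMap.exists_apply_eq_of_algHom ((Pi.evalAlgHom ℂ _ k).comp (ρ.diagOfIsDiag hρ))
  refine ⟨U, hU, x, fun f => ?_⟩
  have : star U * φ f * U = diagonal (fun k => f (x k)) := by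
    rw [← hρ_apply, ← (hρ f).diagonal_diag]
    exact congrArg diagonal (funext fun k => hx k f)
  rw [← this, ← mul_assoc, ← mul_assoc, hU.2, one_mul, mul_assoc, hU.2, mul_one]

theorem Matrix.trace_mul_mul_star_of_mem_unitary {m α : Type*} [Fintype m] [DecidableEq m]
    [CommSemiring α] [StarRing α] {U : Matrix m m α} (hU : U ∈ unitary (Matrix m m α))
    (A : Matrix m m α) : (U * A * star U).trace = A.trace := by
  rw [trace_mul_cycle, hU.1, one_mul]

theorem Matrix.submatrix_id_mem_unitary {m α : Type*} [Fintype m] [DecidableEq m]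
    [Semiring α] [StarRing α] {U : Matrix m m α} (hU : U ∈ unitary (Matrix m m α))
    (σ : Equiv.Perm m) : U.submatrix id σ ∈ unitary (Matrix m m α) := by
  rw [Unitary.mem_iff, star_eq_conjTranspose, conjTranspose_submatrix, ← star_eq_conjTranspose,
    ← submatrix_mul _ _ _ _ _ bijective_id, ← submatrix_mul _ _ _ _ _ σ.bijective, hU.1, hU.2,
    submatrix_one_equiv, submatrix_id_id]
  exact ⟨rfl, rfl⟩

theorem Matrix.submatrix_id_mul_diagonal_mul_star {m α : Type*} [Fintype m] [DecidableEq m]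
    [Semiring α] [StarRing α] (U : Matrix m m α) (σ : Equiv.Perm m) (d : m → α) :
    U.submatrix id σ * diagonal (d ∘ σ) * star (U.submatrix id σ) = U * diagonal d * star U := by
  rw [star_eq_conjTranspose, conjTranspose_submatrix, ← submatrix_diagonal_equiv,
    ← submatrix_mul _ _ _ _ _ σ.bijective, ← submatrix_mul _ _ _ _ _ σ.bijective,
    submatrix_id_id, star_eq_conjTranspose]

theorem Matrix.norm_conj_sub_conj_diagonal {m 𝕜 : Type*} [Fintype m] [DecidableEq m] [RCLike 𝕜]
    {U W : Matrix m m 𝕜} (hU : U ∈ unitary (Matrix m m 𝕜)) (hW : W ∈ unitary (Matrix m m 𝕜))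
    (d e : m → 𝕜) :
    ‖star (U * star W) * (U * diagonal d * star U) * (U * star W) - W * diagonal e * star W‖ =
      ‖d - e‖ := by
  have : star (U * star W) * (U * diagonal d * star U) * (U * star W) =
      W * diagonal d * star W := by
    simp only [star_mul, star_star, mul_assoc, ← mul_assoc (star U) U, hU.1, one_mul]
  rw [this, ← sub_mul, ← mul_sub, diagonal_sub, mul_assoc, CStarRing.norm_mem_unitary_mul _ hW,
    CStarRing.norm_mul_mem_unitary _ (Unitary.star_mem hW), l2_opNorm_diagonal]
  rfl

theorem ContinuousMap.exists_pos_forall_dist_lt {X E : Type*} [PseudoMetricSpace X]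
    [CompactSpace X] [PseudoMetricSpace E] (F : Finset C(X, E)) {ε : ℝ} (hε : 0 < ε) :
    ∃ r > 0, ∀ f ∈ F, ∀ a b, dist a b < r → dist (f a) (f b) < ε := by
  have hΦ : UniformContinuous fun (p : X) (f : F) => (f : C(X, E)) p :=
    CompactSpace.uniformContinuous_of_continuous (continuous_pi fun f => f.1.continuous)
  obtain ⟨r, hr, h⟩ := Metric.uniformContinuous_iff.1 hΦ ε hε
  exact ⟨r, hr, fun f hf a b hab => (dist_le_pi_dist _ _ ⟨f, hf⟩).trans_lt (h hab)⟩

theorem Finset.natCast_card_filter_le_sum {ι R : Type*} [AddCommMonoidWithOne R] [PartialOrder R]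
    [IsOrderedAddMonoid R] (s : Finset ι) {P : ι → Prop} [DecidablePred P] {g : ι → R}
    (hg : ∀ i ∈ s, (if P i then 1 else 0) ≤ g i) :
    (#{i ∈ s | P i} : R) ≤ ∑ i ∈ s, g i := by
  rw [natCast_card_filter]
  exact sum_le_sum hg

theorem Finset.sum_le_natCast_card_filter {ι R : Type*} [AddCommMonoidWithOne R] [PartialOrder R]
    [IsOrderedAddMonoid R] (s : Finset ι) {P : ι → Prop} [DecidablePred P] {g : ι → R}
    (hg : ∀ i ∈ s, g i ≤ if P i then 1 else 0) :
    ∑ i ∈ s, g i ≤ (#{i ∈ s | P i} : R) := by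
  rw [natCast_card_filter]
  exact sum_le_sum hg

open Classical in
theorem exists_perm_forall_dist_lt {X ι : Type*} [PseudoMetricSpace X] [Fintype ι]
    {x y : ι → X} {η : ℝ} {s : Finset X} (hs : ∀ p, ∃ z ∈ s, dist p z < η)
    (hxy : ∀ T ⊆ s, #{i | x i ∈ cthickening η (T : Set X)} ≤
      #{j | y j ∈ thickening (2 * η) (T : Set X)}) :
    ∃ σ : Equiv.Perm ι, ∀ i, dist (x i) (y (σ i)) < 3 * η := by
  let t (i : ι) : Finset ι := {j | dist (x i) (y j) < 3 * η}
  have hall (S : Finset ι) : #S ≤ #(S.biUnion t) := by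
    let T : Finset X := {z ∈ s | ∃ i ∈ S, dist (x i) z < η}
    calc #S ≤ #{i | x i ∈ cthickening η (T : Set X)} := card_le_card fun i hi => by
          obtain ⟨z, hz, hiz⟩ := hs (x i)
          exact mem_filter.2 ⟨mem_univ _, mem_cthickening_of_dist_le _ z _ _
            (by simpa [T] using ⟨hz, i, hi, hiz⟩) hiz.le⟩
      _ ≤ #{j | y j ∈ thickening (2 * η) (T : Set X)} := hxy T (filter_subset _ _)
      _ ≤ #(S.biUnion t) := card_le_card fun j hj => by
          obtain ⟨z, hzT, hjz⟩ := mem_thickening_iff.1 (mem_filter.1 hj).2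
          obtain ⟨-, i, hi, hiz⟩ := mem_filter.1 hzT
          refine mem_biUnion.2 ⟨i, hi, mem_filter.2 ⟨mem_univ _, ?_⟩⟩
          linarith [dist_triangle_right (x i) (y j) z]
  obtain ⟨f, hf, hft⟩ := (all_card_le_biUnion_card_iff_exists_injective t).1 hall
  exact ⟨Equiv.ofBijective f hf.bijective_of_finite, fun i => (mem_filter.1 (hft i)).2⟩

theorem exists_finset_forall_exists_perm_dist_lt {X : Type*} [PseudoMetricSpace X]
    [CompactSpace X] (ι : Type*) [Fintype ι] {r : ℝ} (hr : 0 < r) :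
    ∃ G : Finset C(X, ℝ), ∀ x y : ι → X, (∀ g ∈ G, |∑ i, g (x i) - ∑ i, g (y i)| < 1) →
      ∃ σ : Equiv.Perm ι, ∀ i, dist (x i) (y (σ i)) < r := by
  classical
  obtain ⟨s, hs⟩ : ∃ s : Finset X, ∀ p, ∃ z ∈ s, dist p z < r / 3 := by
    obtain ⟨t, -, ht, hcover⟩ :=
      finite_cover_balls_of_compact (isCompact_univ (X := X)) (by positivity : 0 < r / 3)
    refine ⟨ht.toFinset, fun p => ?_⟩
    simpa using hcover (Set.mem_univ p)
  have hbump (T : Finset X) : ∃ g : C(X, ℝ), Set.EqOn g 0 (thickening (2 * (r / 3)) T)ᶜ ∧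
      Set.EqOn g 1 (cthickening (r / 3) T) ∧ ∀ p, g p ∈ Set.Icc 0 1 :=
    exists_continuous_zero_one_of_isClosed isOpen_thickening.isClosed_compl isClosed_cthickening
      (Set.disjoint_compl_left_iff_subset.2
        (cthickening_subset_thickening' (by positivity) (by linarith) _))
  choose g hg0 hg1 hg01 using hbump
  refine ⟨s.powerset.image g, fun x y hxy => ?_⟩
  obtain ⟨σ, hσ⟩ := exists_perm_forall_dist_lt (x := x) (y := y) hs fun T hT => by
    have hlt := abs_lt.1 (hxy (g T) (mem_image_of_mem _ (mem_powerset.2 hT)))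
    have hx := natCast_card_filter_le_sum univ
      (P := fun i => x i ∈ cthickening (r / 3) (T : Set X)) (g := fun i => g T (x i)) fun i _ => by
        split_ifs with h
        · exact (hg1 T h).ge
        · exact (hg01 T _).1
    have hy := sum_le_natCast_card_filter univ
      (P := fun j => y j ∈ thickening (2 * (r / 3)) (T : Set X)) (g := fun j => g T (y j))
      fun j _ => by
        split_ifs with h
        · exact (hg01 T _).2
        · exact (hg0 T h).le
    rw [← Nat.lt_add_one_iff, ← Nat.cast_lt (α := ℝ), Nat.cast_add_one]
    linarith
  exact ⟨σ, fun i => by linarith [hσ i]⟩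

/-- Uniqueness lemma: two unital *-homomorphisms `C(X) → Mₙ(ℂ)` whose normalized traces
almost agree on a suitable finite set are approximately unitarily equivalent. -/
theorem uniqueness_finite_dim
    {X : Type*} [MetricSpace X] [CompactSpace X] (n : ℕ) (hn : 1 ≤ n)
    (ε : ℝ) (hε : 0 < ε) (F : Finset C(X, ℂ)) :
    ∃ δ > 0, ∃ G : Finset C(X, ℂ),
      ∀ φ ψ : C(X, ℂ) →⋆ₐ[ℂ] Matrix (Fin n) (Fin n) ℂ,
        (∀ g ∈ G, ‖(φ g).trace / n - (ψ g).trace / n‖ < δ) →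
        ∃ u ∈ unitary (Matrix (Fin n) (Fin n) ℂ),
          ∀ f ∈ F, ‖star u * φ f * u - ψ f‖ < ε := by
  classical
  obtain ⟨r, hr, hF⟩ := ContinuousMap.exists_pos_forall_dist_lt F hε
  obtain ⟨G, hG⟩ := exists_finset_forall_exists_perm_dist_lt (X := X) (Fin n) hr
  refine ⟨1 / n, by positivity, G.image ((Complex.ofRealCLM : C(ℝ, ℂ)).comp ·),
    fun φ ψ hφψ => ?_⟩
  obtain ⟨U, hU, x, hφ⟩ := φ.exists_unitary_eq_conj_diagonal
  obtain ⟨W, hW, y, hψ⟩ := ψ.exists_unitary_eq_conj_diagonal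
  obtain ⟨σ, hσ⟩ := hG x y fun g hg => by
    have := hφψ _ (mem_image_of_mem _ hg)
    rw [hφ, hψ, trace_mul_mul_star_of_mem_unitary hU, trace_mul_mul_star_of_mem_unitary hW,
      trace_diagonal, trace_diagonal, ← sub_div, norm_div, Complex.norm_natCast,
      div_lt_div_iff_of_pos_right (by positivity)] at this
    simpa [← Complex.ofReal_sum, ← Complex.ofReal_sub, Complex.norm_real] using this
  refine ⟨U * star (W.submatrix id σ),
    mul_mem hU (Unitary.star_mem (submatrix_id_mem_unitary hW σ)), fun f hf => ?_⟩
  rw [hφ, hψ, ← submatrix_id_mul_diagonal_mul_star W σ,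
    norm_conj_sub_conj_diagonal hU (submatrix_id_mem_unitary hW σ)]
  exact (pi_norm_lt_iff hε).2 fun i => by simpa [dist_eq_norm] using hF f hf _ _ (hσ i)
end

section
/- Let X be a compact metric space, n ≥ 1 an integer, and M > 0. For every ε > 0 and every finite subset F ⊂ C(X) there exist δ > 0 and a finite subset G ⊂ C(X) such that: for any unital map φ : C(X) → Mₙ(ℂ) with ‖φ(f)‖ ≤ M whenever ‖f‖ ≤ 1, satisfying ‖φ(λ₁x + λ₂y) − (λ₁φ(x) + λ₂φ(y))‖ < δ, ‖φ(xy) − φ(x)φ(y)‖ < δ, and ‖φ(x*) − φ(x)*‖ < δ for all scalars λ₁, λ₂ with |λᵢ| ≤ 1 and all x, y ∈ G, there exists a unital *-homomorphism ψ : C(X) → Mₙ(ℂ) with ‖φ(f) − ψ(f)‖ < ε for all f ∈ F. -/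
open scoped Matrix.Norms.L2Operator

/-!
Argue by contradiction and compactness. If the statement failed, we could pick, for every
`k : ℕ` and every finite `G`, a counterexample `Φ (k, G)` which is `1/(k+1)`-approximately a
*-homomorphism on `G`. Every value `Φ p g` eventually lies in a fixed ball of the
finite-dimensional target, so along an ultrafilter finer than `atTop` the maps converge pointwise
to some `Ψ`. All defects tend to zero, hence `Ψ` is additive, multiplicative, unital,
`*`-preserving and homogeneous for scalars of norm at most `1` (so for all scalars): it is a unital
*-homomorphism, and `Φ p` is eventually `ε`-close to it on `F`, a contradiction.
-/

open Filter Topology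

section

variable {A B : Type*}

section Approx

variable [Ring A] [Algebra ℂ A] [Star A] [NormedRing B] [NormedAlgebra ℂ B] [StarRing B]

def IsApproxStarHomOn (G : Finset A) (δ : ℝ) (φ : A → B) : Prop :=
  ∀ (c₁ c₂ : ℂ), ‖c₁‖ ≤ 1 → ‖c₂‖ ≤ 1 →
    ∀ x ∈ G, ∀ y ∈ G,
      ‖φ (c₁ • x + c₂ • y) - (c₁ • φ x + c₂ • φ y)‖ < δ ∧
      ‖φ (x * y) - φ x * φ y‖ < δ ∧
      ‖φ (star x) - star (φ x)‖ < δ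

namespace IsApproxStarHomOn

variable {G : Finset A} {δ : ℝ} {φ : A → B} {x y : A}

theorem norm_map_add_sub_lt (h : IsApproxStarHomOn G δ φ) (hx : x ∈ G) (hy : y ∈ G) :
    ‖φ (x + y) - (φ x + φ y)‖ < δ := by
  simpa using (h 1 1 (by simp) (by simp) x hx y hy).1

theorem norm_map_smul_sub_lt (h : IsApproxStarHomOn G δ φ) {c : ℂ} (hc : ‖c‖ ≤ 1)
    (hx : x ∈ G) : ‖φ (c • x) - c • φ x‖ < δ := by
  simpa using (h c 0 hc (by simp) x hx x hx).1

theorem norm_map_mul_sub_lt (h : IsApproxStarHomOn G δ φ) (hx : x ∈ G) (hy : y ∈ G) :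
    ‖φ (x * y) - φ x * φ y‖ < δ :=
  (h 1 1 (by simp) (by simp) x hx y hy).2.1

theorem norm_map_star_sub_lt (h : IsApproxStarHomOn G δ φ) (hx : x ∈ G) :
    ‖φ (star x) - star (φ x)‖ < δ :=
  (h 1 1 (by simp) (by simp) x hx x hx).2.2

end IsApproxStarHomOn

end Approx

theorem IsApproxStarHomOn.norm_le [NormedRing A] [NormedAlgebra ℂ A] [Star A] [NormedRing B]
    [NormedAlgebra ℂ B] [StarRing B] {G : Finset A} {δ M : ℝ} {φ : A → B}
    (h : IsApproxStarHomOn G δ φ) (hδ : δ ≤ 1) (hφ : ∀ f : A, ‖f‖ ≤ 1 → ‖φ f‖ ≤ M)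
    {g : A} (hg : g ∈ G) : ‖φ g‖ ≤ (M + 1) * (‖g‖ + 1) := by
  set c : ℂ := ((‖g‖ + 1 : ℝ) : ℂ)⁻¹
  have hc : ‖c‖ = (‖g‖ + 1)⁻¹ := by
    rw [norm_inv, Complex.norm_real, Real.norm_of_nonneg (by positivity)]
  have hc₁ : ‖c‖ ≤ 1 := hc ▸ inv_le_one_of_one_le₀ (by simp)
  have hcg : ‖c • g‖ ≤ 1 := by
    rw [norm_smul, hc, inv_mul_le_one₀ (by positivity)]
    linarith
  calc ‖φ g‖ = (‖g‖ + 1) * ‖c • φ g‖ := by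
        rw [norm_smul, hc, ← mul_assoc, mul_inv_cancel₀ (by positivity), one_mul]
    _ ≤ (‖g‖ + 1) * (‖φ (c • g)‖ + ‖φ (c • g) - c • φ g‖) := by
        gcongr; exact norm_le_insert _ _
    _ ≤ (‖g‖ + 1) * (M + 1) := by
        gcongr
        · exact hφ _ hcg
        · exact ((h.norm_map_smul_sub_lt hc₁ hg).trans_le hδ).le
    _ = (M + 1) * (‖g‖ + 1) := mul_comm _ _

theorem eq_of_tendsto_of_norm_sub_lt {ι E : Type*} [NormedAddCommGroup E] {l : Filter ι}
    [l.NeBot] {u v : ι → E} {a b : E} {δ : ι → ℝ} (hu : Tendsto u l (𝓝 a))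
    (hv : Tendsto v l (𝓝 b)) (hδ : Tendsto δ l (𝓝 0)) (huv : ∀ᶠ i in l, ‖u i - v i‖ < δ i) :
    a = b := by
  have hsub : Tendsto (fun i => u i - v i) l (𝓝 0) :=
    squeeze_zero_norm' (huv.mono fun _ h => h.le) hδ
  exact sub_eq_zero.mp (tendsto_nhds_unique (hu.sub hv) hsub)

theorem Ultrafilter.exists_tendsto_of_eventually_norm_le {ι E : Type*} [NormedAddCommGroup E]
    [ProperSpace E] (𝒰 : Ultrafilter ι) {u : ι → E} {R : ℝ} (h : ∀ᶠ i in 𝒰, ‖u i‖ ≤ R) :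
    ∃ a, Tendsto u 𝒰 (𝓝 a) := by
  obtain ⟨a, -, ha⟩ := (isCompact_closedBall (0 : E) R).ultrafilter_le_nhds' (𝒰.map u)
    (h.mono fun _ hi => mem_closedBall_zero_iff.2 hi)
  exact ⟨a, ha⟩

theorem AddMonoidHom.map_smul_of_norm_le_one {𝕜 E F : Type*} [RCLike 𝕜] [AddCommGroup E]
    [Module 𝕜 E] [AddCommGroup F] [Module 𝕜 F] (f : E →+ F)
    (h : ∀ c : 𝕜, ‖c‖ ≤ 1 → ∀ x, f (c • x) = c • f x) (c : 𝕜) (x : E) :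
    f (c • x) = c • f x := by
  obtain ⟨m, hm⟩ := exists_nat_gt ‖c‖
  have hm₀ : (m : 𝕜) ≠ 0 := Nat.cast_ne_zero.2 (Nat.cast_pos.1 ((norm_nonneg c).trans_lt hm)).ne'
  have hcm : ‖c / m‖ ≤ 1 := by
    rw [norm_div, RCLike.norm_natCast]; exact div_le_one_of_le₀ hm.le (Nat.cast_nonneg _)
  calc f (c • x) = f (m • (c / m) • x) := by
        rw [← Nat.cast_smul_eq_nsmul 𝕜, smul_smul, mul_div_cancel₀ _ hm₀]
    _ = c • f x := by
        rw [map_nsmul, h _ hcm, ← Nat.cast_smul_eq_nsmul 𝕜, smul_smul, mul_div_cancel₀ _ hm₀]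

theorem exists_starAlgHom_eq_of_tendsto {ι : Type*} [Ring A] [Algebra ℂ A] [Star A] [NormedRing B]
    [NormedAlgebra ℂ B] [StarRing B] [ContinuousStar B] {l : Filter ι} [l.NeBot] {δ : ι → ℝ}
    {G : ι → Finset A} {Φ : ι → A → B} {Ψ : A → B} (hδ : Tendsto δ l (𝓝 0))
    (hG : ∀ x, ∀ᶠ i in l, x ∈ G i) (hΦ : ∀ᶠ i in l, IsApproxStarHomOn (G i) (δ i) (Φ i))
    (hΦ₁ : ∀ᶠ i in l, Φ i 1 = 1) (hΨ : ∀ x, Tendsto (fun i => Φ i x) l (𝓝 (Ψ x))) :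
    ∃ ψ : A →⋆ₐ[ℂ] B, ⇑ψ = Ψ := by
  have hadd (x y : A) : Ψ (x + y) = Ψ x + Ψ y :=
    eq_of_tendsto_of_norm_sub_lt (hΨ _) ((hΨ x).add (hΨ y)) hδ <| by
      filter_upwards [hΦ, hG x, hG y] with i hi hx hy using hi.norm_map_add_sub_lt hx hy
  have hsmul (c : ℂ) (hc : ‖c‖ ≤ 1) (x : A) : Ψ (c • x) = c • Ψ x :=
    eq_of_tendsto_of_norm_sub_lt (hΨ _) ((hΨ x).const_smul c) hδ <| by
      filter_upwards [hΦ, hG x] with i hi hx using hi.norm_map_smul_sub_lt hc hx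
  have hmul (x y : A) : Ψ (x * y) = Ψ x * Ψ y :=
    eq_of_tendsto_of_norm_sub_lt (hΨ _) ((hΨ x).mul (hΨ y)) hδ <| by
      filter_upwards [hΦ, hG x, hG y] with i hi hx hy using hi.norm_map_mul_sub_lt hx hy
  have hstar (x : A) : Ψ (star x) = star (Ψ x) :=
    eq_of_tendsto_of_norm_sub_lt (hΨ _) (hΨ x).star hδ <| by
      filter_upwards [hΦ, hG x] with i hi hx using hi.norm_map_star_sub_lt hx
  have hone : Ψ 1 = 1 :=
    tendsto_nhds_unique (hΨ 1) (tendsto_const_nhds.congr' (hΦ₁.mono fun _ h => h.symm))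
  let ρ : A →+* B := RingHom.mk' ⟨⟨Ψ, hone⟩, hmul⟩ hadd
  exact ⟨{ AlgHom.mk' ρ ((AddMonoidHom.mk' Ψ hadd).map_smul_of_norm_le_one hsmul) with
    map_star' := hstar }, rfl⟩

theorem exists_starAlgHom_near_of_isApproxStarHomOn [NormedRing A] [NormedAlgebra ℂ A] [Star A]
    [NormedRing B] [NormedAlgebra ℂ B] [StarRing B] [ContinuousStar B] [ProperSpace B]
    (M ε : ℝ) (hε : 0 < ε) (F : Finset A) :
    ∃ δ > 0, ∃ G : Finset A, ∀ φ : A → B, φ 1 = 1 → (∀ f : A, ‖f‖ ≤ 1 → ‖φ f‖ ≤ M) →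
      IsApproxStarHomOn G δ φ → ∃ ψ : A →⋆ₐ[ℂ] B, ∀ f ∈ F, ‖φ f - ψ f‖ < ε := by
  classical
  by_contra! hfar
  choose Φ hΦ₁ hΦM hΦ hΦfar using
    fun p : ℕ × Finset A => hfar (1 / (p.1 + 1)) (by positivity) p.2
  obtain ⟨𝒰, h𝒰⟩ := Ultrafilter.exists_le (atTop : Filter (ℕ × Finset A))
  have hδ : Tendsto (fun p : ℕ × Finset A => 1 / ((p.1 : ℝ) + 1)) 𝒰 (𝓝 0) :=
    tendsto_one_div_add_atTop_nhds_zero_nat.comp <|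
      (tendsto_atTop_atTop_of_monotone monotone_fst fun k => ⟨(k, ∅), le_rfl⟩).mono_left h𝒰
  have hG (x : A) : ∀ᶠ p : ℕ × Finset A in 𝒰, x ∈ p.2 :=
    h𝒰 <| (eventually_ge_atTop (0, {x})).mono fun _ hp => hp.2 (Finset.mem_singleton_self x)
  have hbdd (g : A) : ∀ᶠ p : ℕ × Finset A in 𝒰, ‖Φ p g‖ ≤ (M + 1) * (‖g‖ + 1) :=
    (hG g).mono fun p hg => (hΦ p).norm_le (div_le_one_of_le₀ (by simp) (by positivity))
      (hΦM p) hg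
  choose Ψ hΨ using fun g => 𝒰.exists_tendsto_of_eventually_norm_le (hbdd g)
  obtain ⟨ψ, rfl⟩ := exists_starAlgHom_eq_of_tendsto hδ hG (.of_forall hΦ) (.of_forall hΦ₁) hΨ
  have hclose : ∀ᶠ p : ℕ × Finset A in 𝒰, ∀ f ∈ F, ‖Φ p f - ψ f‖ < ε :=
    (eventually_all_finset F).2 fun f _ =>
      (tendsto_iff_norm_sub_tendsto_zero.1 (hΨ f)).eventually (gt_mem_nhds hε)
  obtain ⟨p, hp⟩ := hclose.exists
  obtain ⟨f, hf, hεf⟩ := hΦfar p ψ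
  exact (hp f hf).not_ge hεf

end

theorem almost_hom_close_to_hom_general
    {X : Type*} [MetricSpace X] [CompactSpace X] (n : ℕ) (M : ℝ)
    (ε : ℝ) (hε : 0 < ε) (F : Finset C(X, ℂ)) :
    ∃ δ > 0, ∃ G : Finset C(X, ℂ),
      ∀ φ : C(X, ℂ) → Matrix (Fin n) (Fin n) ℂ,
        φ 1 = 1 →
        (∀ f : C(X, ℂ), ‖f‖ ≤ 1 → ‖φ f‖ ≤ M) →
        (∀ (c₁ c₂ : ℂ), ‖c₁‖ ≤ 1 → ‖c₂‖ ≤ 1 →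
          ∀ x ∈ G, ∀ y ∈ G,
            ‖φ (c₁ • x + c₂ • y) - (c₁ • φ x + c₂ • φ y)‖ < δ ∧
            ‖φ (x * y) - φ x * φ y‖ < δ ∧
            ‖φ (star x) - star (φ x)‖ < δ) →
        ∃ ψ : C(X, ℂ) →⋆ₐ[ℂ] Matrix (Fin n) (Fin n) ℂ,
          ∀ f ∈ F, ‖φ f - ψ f‖ < ε :=
  exists_starAlgHom_near_of_isApproxStarHomOn M ε hε F

/-- An almost multiplicative, almost linear, almost star-preserving unital map
`C(X) → Mₙ(ℂ)` bounded by `M` is close to a genuine unital *-homomorphism. -/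
theorem almost_hom_close_to_hom
    {X : Type*} [MetricSpace X] [CompactSpace X] (n : ℕ) (hn : 1 ≤ n) (M : ℝ) (hM : 0 < M)
    (ε : ℝ) (hε : 0 < ε) (F : Finset C(X, ℂ)) :
    ∃ δ > 0, ∃ G : Finset C(X, ℂ),
      ∀ φ : C(X, ℂ) → Matrix (Fin n) (Fin n) ℂ,
        φ 1 = 1 →
        (∀ f : C(X, ℂ), ‖f‖ ≤ 1 → ‖φ f‖ ≤ M) →
        (∀ (c₁ c₂ : ℂ), ‖c₁‖ ≤ 1 → ‖c₂‖ ≤ 1 →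
          ∀ x ∈ G, ∀ y ∈ G,
            ‖φ (c₁ • x + c₂ • y) - (c₁ • φ x + c₂ • φ y)‖ < δ ∧
            ‖φ (x * y) - φ x * φ y‖ < δ ∧
            ‖φ (star x) - star (φ x)‖ < δ) →
        ∃ ψ : C(X, ℂ) →⋆ₐ[ℂ] Matrix (Fin n) (Fin n) ℂ,
          ∀ f ∈ F, ‖φ f - ψ f‖ < ε :=
  almost_hom_close_to_hom_general n M ε hε F
end

section
/- Let Y be a compact metric space such that every continuous map from Y to the circle 𝕋 lifts through ℝ (equivalently, the first Čech cohomology of Y vanishes), but suppose there exist n ≥ 2 and a unitary u ∈ C(Y, Mₙ) not connected to the identity in the unitary group of C(Y, Mₙ). Then the unital *-homomorphism φ : C(𝕋) → C(Y, Mₙ) defined by φ(f) = f(u) cannot be approximately diagonalized: there exists ε > 0 (namely ε = 1) such that for any continuous maps α₁,...,αₙ : Y → 𝕋 and any mutually orthogonal rank-one projections p₁,...,pₙ ∈ C(Y, Mₙ) with Σpᵢ = 1, one has ‖u − Σᵢ₌₁ⁿ αᵢ pᵢ‖ ≥ 1. -/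
open scoped Matrix.Norms.L2Operator
open Complex
set_option synthInstance.maxHeartbeats 1000000

section auxlemmas

set_option linter.unusedSectionVars false
set_option maxHeartbeats 1000000

lemma aux_sum_smul_mul {R : Type*} [Ring R] [Algebra ℂ R] {m : Type*} [Fintype m]
    [DecidableEq m] (z ζ : m → ℂ) (P : m → R)
    (hidem : ∀ i, P i * P i = P i) (horth : ∀ i j, i ≠ j → P i * P j = 0) :
    (∑ i, z i • P i) * (∑ j, ζ j • P j) = ∑ i, (z i * ζ i) • P i := by
  rw [Finset.sum_mul_sum]
  refine Finset.sum_congr rfl fun i _ => ?_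
  rw [Finset.sum_eq_single i]
  · rw [smul_mul_smul_comm, hidem]
  · intro j _ hj
    rw [smul_mul_smul_comm, horth i j (Ne.symm hj), smul_zero]
  · intro h; exact absurd (Finset.mem_univ i) h

lemma aux_path_trans {A : Type*} [Monoid A] [StarMul A] [TopologicalSpace A] {a b c : A}
    (h1 : ∃ U : ℝ → A, ContinuousOn U (Set.Icc 0 1) ∧
      (∀ t ∈ Set.Icc (0:ℝ) 1, U t ∈ unitary A) ∧ U 0 = a ∧ U 1 = b)
    (h2 : ∃ U : ℝ → A, ContinuousOn U (Set.Icc 0 1) ∧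
      (∀ t ∈ Set.Icc (0:ℝ) 1, U t ∈ unitary A) ∧ U 0 = b ∧ U 1 = c) :
    ∃ U : ℝ → A, ContinuousOn U (Set.Icc 0 1) ∧
      (∀ t ∈ Set.Icc (0:ℝ) 1, U t ∈ unitary A) ∧ U 0 = a ∧ U 1 = c := by
  obtain ⟨P, hPc, hPu, hP0, hP1⟩ := h1
  obtain ⟨Q, hQc, hQu, hQ0, hQ1⟩ := h2
  refine ⟨fun t => if t ≤ 2⁻¹ then P (2*t) else Q (2*t - 1), ?_, ?_, ?_, ?_⟩
  · apply ContinuousOn.if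
    · intro s hs
      have hfr : s ∈ frontier (Set.Iic (2⁻¹:ℝ)) := hs.2
      rw [frontier_Iic] at hfr
      rw [Set.mem_singleton_iff] at hfr
      subst hfr
      norm_num [hP1, hQ0]
    · have hcl : closure {a : ℝ | a ≤ 2⁻¹} = Set.Iic (2⁻¹:ℝ) :=
        isClosed_Iic.closure_eq
      rw [hcl]
      refine ContinuousOn.comp hPc ((continuous_const.mul continuous_id).continuousOn) ?_
      rintro t ⟨⟨ht0, ht1⟩, ht2⟩
      have ht2' : t ≤ 2⁻¹ := ht2
      simp only [Set.mem_Icc]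
      constructor <;> linarith
    · have hcl : closure {a : ℝ | ¬ a ≤ 2⁻¹} = Set.Ici (2⁻¹:ℝ) := by
        have : {a : ℝ | ¬ a ≤ 2⁻¹} = Set.Ioi (2⁻¹:ℝ) := by
          ext s; simp [not_le]
        rw [this, closure_Ioi]
      rw [hcl]
      refine ContinuousOn.comp hQc
        (((continuous_const.mul continuous_id).sub continuous_const).continuousOn) ?_
      rintro t ⟨⟨ht0, ht1⟩, ht2⟩
      have ht2' : (2⁻¹:ℝ) ≤ t := ht2
      simp only [Set.mem_Icc]
      constructor <;> linarith
  · intro t ht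
    by_cases hle : t ≤ 2⁻¹
    · simp only [if_pos hle]
      exact hPu _ ⟨by linarith [ht.1], by linarith⟩
    · simp only [if_neg hle]
      push_neg at hle
      exact hQu _ ⟨by linarith, by linarith [ht.2]⟩
  · norm_num [hP0]
  · norm_num [hQ1]

variable {A : Type*} [NormedRing A] [StarRing A] [CStarRing A] [CompleteSpace A]
  [NormedAlgebra ℂ A] [StarModule ℂ A] [Nontrivial A]

lemma aux_cayley_unitary {h : A} (hh : star h = -h) (hn : ‖h‖ < 1) :
    (1 + h) * Ring.inverse (1 - h) ∈ unitary A := by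
  have hu1 : IsUnit (1 - h) := isUnit_one_sub_of_norm_lt_one hn
  set d := Ring.inverse (1 - h) with hd
  have hd1 : (1 - h) * d = 1 := Ring.mul_inverse_cancel _ hu1
  have hd2 : d * (1 - h) = 1 := Ring.inverse_mul_cancel _ hu1
  have hcomm : (1 + h) * (1 - h) = (1 - h) * (1 + h) := by noncomm_ring
  have hstar1h : star (1 + h) = 1 - h := by rw [star_add, star_one, hh]; abel
  have hstar1h' : star (1 - h) = 1 + h := by rw [star_sub, star_one, hh]; abel
  have hstard : star d * (1 + h) = 1 := by
    calc star d * (1 + h) = star d * star (1 - h) := by rw [hstar1h']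
    _ = star ((1 - h) * d) := (star_mul _ _).symm
    _ = 1 := by rw [hd1, star_one]
  have hstard' : (1 + h) * star d = 1 := by
    calc (1 + h) * star d = star (1 - h) * star d := by rw [hstar1h']
    _ = star (d * (1 - h)) := (star_mul _ _).symm
    _ = 1 := by rw [hd2, star_one]
  have hdcomm : d * (1 + h) = (1 + h) * d := by
    calc d * (1 + h) = d * (1 + h) * ((1 - h) * d) := by rw [hd1, mul_one]
    _ = d * ((1 + h) * (1 - h)) * d := by simp only [mul_assoc]
    _ = d * ((1 - h) * (1 + h)) * d := by rw [hcomm]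
    _ = (d * (1 - h)) * ((1 + h) * d) := by simp only [mul_assoc]
    _ = (1 + h) * d := by rw [hd2, one_mul]
  rw [Unitary.mem_iff]
  constructor
  · calc star ((1 + h) * d) * ((1 + h) * d)
        = (star d * star (1 + h)) * ((1 + h) * d) := by rw [star_mul]
    _ = star d * ((1 - h) * (1 + h)) * d := by rw [hstar1h]; simp only [mul_assoc]
    _ = star d * ((1 + h) * (1 - h)) * d := by rw [hcomm]
    _ = (star d * (1 + h)) * ((1 - h) * d) := by simp only [mul_assoc]
    _ = 1 := by rw [hstard, hd1, one_mul]
  · calc ((1 + h) * d) * star ((1 + h) * d)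
        = ((1 + h) * d) * (star d * (1 - h)) := by rw [star_mul, hstar1h]
    _ = (d * (1 + h)) * (star d * (1 - h)) := by rw [hdcomm]
    _ = d * ((1 + h) * star d) * (1 - h) := by simp only [mul_assoc]
    _ = d * (1 - h) := by rw [hstard']; simp only [mul_one]
    _ = 1 := hd2

lemma aux_unitary_path_of_norm_lt {w : A} (hw : w ∈ unitary A) (hw1 : ‖1 - w‖ < 1) :
    ∃ U : ℝ → A, ContinuousOn U (Set.Icc 0 1) ∧
      (∀ t ∈ Set.Icc (0:ℝ) 1, U t ∈ unitary A) ∧ U 0 = 1 ∧ U 1 = w := by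
  obtain ⟨hw_left, hw_right⟩ := Unitary.mem_iff.mp hw
  set x : A := 1 - w with hxdef
  have hxnorm : ‖x‖ < 1 := hw1
  have h2c : ‖(2⁻¹ : ℂ)‖ = 2⁻¹ := by norm_num
  have hs : ‖(2⁻¹ : ℂ) • x‖ < 1 := by
    rw [norm_smul, h2c]; nlinarith [norm_nonneg x]
  set c : Aˣ := Units.oneSub ((2⁻¹ : ℂ) • x) hs with hcdef
  set b : A := (2⁻¹ : ℂ) • (↑c⁻¹ : A) with hbdef
  have hcval : (c : A) = 1 - (2⁻¹ : ℂ) • x := rfl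
  have h1w : 1 + w = (2 : ℂ) • (c : A) := by
    rw [hcval, smul_sub, smul_smul]
    norm_num
    rw [two_smul, hxdef]
    abel
  have hbmul : (1 + w) * b = 1 := by
    rw [h1w, hbdef, smul_mul_smul_comm]; norm_num
  have hmulb : b * (1 + w) = 1 := by
    rw [h1w, hbdef, smul_mul_smul_comm]; norm_num
  have hcinv : (↑c⁻¹ : A) = ∑' n : ℕ, ((2⁻¹ : ℂ) • x) ^ n := rfl
  have hbnorm : ‖b‖ ≤ (1 - 2⁻¹ * ‖x‖)⁻¹ * 2⁻¹ := by
    have h1 : ‖(↑c⁻¹ : A)‖ ≤ ‖(1 : A)‖ - 1 + (1 - ‖(2⁻¹ : ℂ) • x‖)⁻¹ := by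
      rw [hcinv]; exact tsum_geometric_le_of_norm_lt_one _ hs
    rw [CStarRing.norm_one, norm_smul, h2c] at h1
    rw [hbdef, norm_smul, h2c]
    calc 2⁻¹ * ‖(↑c⁻¹ : A)‖ ≤ 2⁻¹ * (1 - 1 + (1 - 2⁻¹ * ‖x‖)⁻¹) := by
          apply mul_le_mul_of_nonneg_left h1 (by norm_num)
    _ = (1 - 2⁻¹ * ‖x‖)⁻¹ * 2⁻¹ := by ring
  set a : A := I • (x * b) with hadef
  have hanorm : ‖a‖ < 1 := by
    have hxb : ‖x * b‖ ≤ ‖x‖ * ((1 - 2⁻¹ * ‖x‖)⁻¹ * 2⁻¹) :=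
      le_trans (norm_mul_le _ _) (mul_le_mul_of_nonneg_left hbnorm (norm_nonneg _))
    have hI : ‖(I : ℂ)‖ = 1 := by simp
    rw [hadef, norm_smul, hI, one_mul]
    refine lt_of_le_of_lt hxb ?_
    have hx0 : (0:ℝ) ≤ ‖x‖ := norm_nonneg x
    have hpos : (0:ℝ) < 1 - 2⁻¹ * ‖x‖ := by nlinarith
    rw [← mul_assoc, mul_comm (‖x‖) _, mul_assoc, inv_mul_lt_iff₀ hpos]
    nlinarith
  have hcw : Commute w (c : A) := by
    rw [hcval, hxdef]
    exact ((Commute.one_right w).sub_right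
      (((Commute.one_right w).sub_right (Commute.refl w)).smul_right _))
  have hwb : Commute w b := (hcw.units_inv_right).smul_right _
  have hstarb : star b = w * b := by
    have h1 : star b * (1 + star w) = 1 := by
      calc star b * (1 + star w) = star b * star (1 + w) := by rw [star_add, star_one]
      _ = star ((1 + w) * b) := (star_mul _ _).symm
      _ = 1 := by rw [hbmul, star_one]
    have h2 : (1 + star w) * (w * b) = 1 := by
      calc (1 + star w) * (w * b) = ((1 + star w) * w) * b := (mul_assoc _ _ _).symm
      _ = (w + 1) * b := by rw [add_mul, one_mul, hw_left]
      _ = (1 + w) * b := by rw [add_comm]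
      _ = 1 := hbmul
    calc star b = star b * ((1 + star w) * (w * b)) := by rw [h2, mul_one]
    _ = (star b * (1 + star w)) * (w * b) := (mul_assoc _ _ _).symm
    _ = w * b := by rw [h1, one_mul]
  have hstara : star a = a := by
    have hstarx : star x = 1 - star w := by rw [hxdef, star_sub, star_one]
    have key : star b * star x = -(x * b) := by
      rw [hstarx, hstarb]
      calc (w * b) * (1 - star w) = w * b - (w * b) * star w := by rw [mul_sub, mul_one]
      _ = w * b - (b * w) * star w := by rw [hwb.eq]
      _ = w * b - b * (w * star w) := by rw [mul_assoc]
      _ = w * b - b := by rw [hw_right, mul_one]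
      _ = -(x * b) := by rw [hxdef]; noncomm_ring
    rw [hadef, star_smul, star_mul, key, smul_neg]
    have hsI : star (I : ℂ) = -I := by simp
    rw [hsI, neg_smul, neg_neg]
  have hgstar : ∀ t : ℝ, star ((I * (t:ℂ)) • a) = -((I * (t:ℂ)) • a) := fun t => by
    rw [star_smul, hstara]
    have : star (I * (t:ℂ)) = -(I * (t:ℂ)) := by
      simp [Complex.conj_ofReal, mul_comm]
    rw [this, neg_smul]
  have hgnorm : ∀ t ∈ Set.Icc (0:ℝ) 1, ‖(I * (t:ℂ)) • a‖ < 1 := by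
    intro t ht
    rw [norm_smul, norm_mul]
    have h1 : ‖(I : ℂ)‖ = 1 := by simp
    have h2 : ‖((t:ℝ) : ℂ)‖ = |t| := by simp [Complex.norm_real]
    rw [h1, h2, one_mul]
    calc |t| * ‖a‖ ≤ 1 * ‖a‖ := by
          apply mul_le_mul_of_nonneg_right _ (norm_nonneg a)
          rw [abs_le]; exact ⟨by linarith [ht.1], ht.2⟩
    _ < 1 := by rw [one_mul]; exact hanorm
  refine ⟨fun t => (1 + (I * (t:ℂ)) • a) * Ring.inverse (1 - (I * (t:ℂ)) • a), ?_, ?_, ?_, ?_⟩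
  · apply ContinuousOn.mul
    · exact (continuous_const.add
        ((continuous_const.mul Complex.continuous_ofReal).smul continuous_const)).continuousOn
    · intro t ht
      have hu : IsUnit (1 - (I * (t:ℂ)) • a) := isUnit_one_sub_of_norm_lt_one (hgnorm t ht)
      have h1 := NormedRing.inverse_continuousAt hu.unit
      rw [IsUnit.unit_spec] at h1
      have g_cont : Continuous (fun s : ℝ => 1 - (I * (s:ℂ)) • a) :=
        continuous_const.sub
          ((continuous_const.mul Complex.continuous_ofReal).smul continuous_const)
      exact (ContinuousAt.comp (x := t) h1 g_cont.continuousAt).continuousWithinAt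
  · exact fun t ht => aux_cayley_unitary (hgstar t) (hgnorm t ht)
  · simp
  · show (1 + (I * ((1:ℝ):ℂ)) • a) * Ring.inverse (1 - (I * ((1:ℝ):ℂ)) • a) = w
    have hone : (I * ((1:ℝ):ℂ)) • a = -(x * b) := by
      rw [Complex.ofReal_one, mul_one, hadef, smul_smul, Complex.I_mul_I, neg_one_smul]
    rw [hone, sub_neg_eq_add, ← sub_eq_add_neg]
    have e1 : 1 - x * b = (w + w) * b := by
      calc 1 - x * b = (1 + w) * b - x * b := by rw [hbmul]
      _ = ((1 + w) - x) * b := (sub_mul _ _ _).symm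
      _ = (w + w) * b := by rw [hxdef]; congr 1; abel
    have e2 : 1 + x * b = b + b := by
      calc 1 + x * b = (1 + w) * b + x * b := by rw [hbmul]
      _ = ((1 + w) + x) * b := (add_mul _ _ _).symm
      _ = ((1:A) + 1) * b := by rw [hxdef]; congr 1; abel
      _ = b + b := by rw [add_mul, one_mul]
    have pf1 : (b + b) * ((2⁻¹:ℂ) • (1 + w)) = 1 := by
      have : b + b = (2:ℂ) • b := by rw [two_smul]
      rw [this, smul_mul_smul_comm, hmulb]
      norm_num
    have pf2 : ((2⁻¹:ℂ) • (1 + w)) * (b + b) = 1 := by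
      have : b + b = (2:ℂ) • b := by rw [two_smul]
      rw [this, smul_mul_smul_comm, hbmul]
      norm_num
    have hinv : Ring.inverse (b + b) = (2⁻¹:ℂ) • (1 + w) :=
      Ring.inverse_unit (⟨b + b, (2⁻¹:ℂ) • (1 + w), pf1, pf2⟩ : Aˣ)
    rw [e1, e2, hinv]
    have e3 : (w + w) * b = (2:ℂ) • (w * b) := by
      rw [two_smul, add_mul]
    rw [e3, smul_mul_smul_comm]
    norm_num
    rw [mul_assoc, hmulb, mul_one]

lemma aux_diag_unitary {Y : Type*} [TopologicalSpace Y] {n : ℕ}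
    (β : Fin n → C(Y, ℂ)) (p : Fin n → C(Y, Matrix (Fin n) (Fin n) ℂ))
    (hβ : ∀ i, β i ∈ unitary C(Y, ℂ))
    (hsa : ∀ i, IsSelfAdjoint (p i)) (hidem : ∀ i, p i * p i = p i)
    (horth : ∀ i j, i ≠ j → p i * p j = 0) (hsum : (∑ i, p i) = 1) :
    (∑ i, β i • p i) ∈ unitary C(Y, Matrix (Fin n) (Fin n) ℂ) := by
  have happly : ∀ y, (∑ i, β i • p i) y = ∑ i, β i y • p i y := by
    intro y
    rw [ContinuousMap.sum_apply]
    exact Finset.sum_congr rfl fun i _ => ContinuousMap.smul_apply' _ _ _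
  have hsa' : ∀ i (y : Y), star (p i y) = p i y := fun i y => by
    have := DFunLike.congr_fun (hsa i) y
    simpa [ContinuousMap.star_apply] using this
  have hidem' : ∀ i (y : Y), p i y * p i y = p i y := fun i y => by
    have := DFunLike.congr_fun (hidem i) y
    simpa using this
  have horth' : ∀ (y : Y) i j, i ≠ j → p i y * p j y = 0 := fun y i j hij => by
    have := DFunLike.congr_fun (horth i j hij) y
    simpa using this
  have hsum' : ∀ y, (∑ i, p i y) = 1 := fun y => by
    have := DFunLike.congr_fun hsum y
    rw [ContinuousMap.sum_apply] at this
    simpa using this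
  have hstarapply : ∀ y, star ((∑ i, β i • p i) y) = ∑ i, star (β i y) • p i y := by
    intro y
    rw [happly, star_sum]
    refine Finset.sum_congr rfl fun i _ => ?_
    rw [star_smul, hsa']
  have hβ1 : ∀ i (y : Y), star (β i y) * β i y = 1 := fun i y => by
    have := DFunLike.congr_fun (Unitary.mem_iff.mp (hβ i)).1 y
    simpa using this
  have hβ2 : ∀ i (y : Y), β i y * star (β i y) = 1 := fun i y => by
    have := DFunLike.congr_fun (Unitary.mem_iff.mp (hβ i)).2 y
    simpa using this
  rw [Unitary.mem_iff]
  constructor <;> ext y <;>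
    simp only [ContinuousMap.mul_apply, ContinuousMap.star_apply, ContinuousMap.one_apply]
  · rw [hstarapply, happly, aux_sum_smul_mul _ _ _ (hidem' · y) (horth' y)]
    have : ∀ i ∈ Finset.univ, (star (β i y) * β i y) • p i y = p i y := fun i _ => by
      rw [hβ1, one_smul]
    rw [Finset.sum_congr rfl this, hsum']
  · rw [hstarapply, happly, aux_sum_smul_mul _ _ _ (hidem' · y) (horth' y)]
    have : ∀ i ∈ Finset.univ, (β i y * star (β i y)) • p i y = p i y := fun i _ => by
      rw [hβ2, one_smul]
    rw [Finset.sum_congr rfl this, hsum']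

end auxlemmas

set_option maxHeartbeats 1000000 in
/-- If every circle-valued continuous function on `Y` can be connected to `1` through
unitaries of `C(Y)`, but `u ∈ C(Y, Mₙ)` is a unitary not connected to the identity,
then `u` is at distance at least `1` from every diagonal unitary
`Σ αᵢ pᵢ` with `αᵢ` circle-valued and `pᵢ` mutually orthogonal rank-one projections. -/
theorem not_approx_diagonalizable_of_K1_nontrivial
    {Y : Type*} [MetricSpace Y] [CompactSpace Y]
    (hY : ∀ w : C(Y, ℂ), w ∈ unitary C(Y, ℂ) →
      ∃ W : ℝ → C(Y, ℂ), ContinuousOn W (Set.Icc 0 1) ∧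
        (∀ t ∈ Set.Icc (0:ℝ) 1, W t ∈ unitary C(Y, ℂ)) ∧ W 0 = w ∧ W 1 = 1)
    (n : ℕ) (hn : 2 ≤ n)
    (u : C(Y, Matrix (Fin n) (Fin n) ℂ))
    (hu : u ∈ unitary C(Y, Matrix (Fin n) (Fin n) ℂ))
    (hu0 : ¬ ∃ U : ℝ → C(Y, Matrix (Fin n) (Fin n) ℂ),
        ContinuousOn U (Set.Icc 0 1) ∧
        (∀ t ∈ Set.Icc (0:ℝ) 1, U t ∈ unitary C(Y, Matrix (Fin n) (Fin n) ℂ)) ∧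
        U 0 = u ∧ U 1 = 1) :
    ∀ (α : Fin n → C(Y, ℂ)) (p : Fin n → C(Y, Matrix (Fin n) (Fin n) ℂ)),
      (∀ i, α i ∈ unitary C(Y, ℂ)) →
      (∀ i, IsSelfAdjoint (p i) ∧ p i * p i = p i ∧ ∀ y, ((p i) y).rank = 1) →
      (∀ i j, i ≠ j → p i * p j = 0) →
      (∑ i, p i) = 1 →
      1 ≤ ‖u - ∑ i, α i • p i‖ := by
  intro α p hα hp horth hsum
  by_contra hcon
  push_neg at hcon
  rcases isEmpty_or_nonempty Y with hY0 | hY1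
  · apply hu0
    haveI : Subsingleton C(Y, Matrix (Fin n) (Fin n) ℂ) :=
      ⟨fun f g => ContinuousMap.ext fun y => isEmptyElim y⟩
    exact ⟨fun _ => 1, continuousOn_const, fun t _ => one_mem (unitary _),
      Subsingleton.elim _ _, rfl⟩
  · haveI : CompleteSpace (Matrix (Fin n) (Fin n) ℂ) := FiniteDimensional.complete ℂ _
    haveI : Nontrivial (Matrix (Fin n) (Fin n) ℂ) := by
      refine ⟨0, 1, fun h => ?_⟩
      have h0 := congr_fun (congr_fun h ⟨0, by omega⟩) ⟨0, by omega⟩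
      rw [Matrix.zero_apply, Matrix.one_apply_eq] at h0
      exact zero_ne_one h0
    haveI : Nontrivial C(Y, Matrix (Fin n) (Fin n) ℂ) := by
      obtain ⟨y⟩ := hY1
      refine ⟨0, 1, fun h => ?_⟩
      have h0 := DFunLike.congr_fun h y
      rw [ContinuousMap.zero_apply, ContinuousMap.one_apply] at h0
      exact zero_ne_one h0
    have hvu : (∑ i, α i • p i) ∈ unitary C(Y, Matrix (Fin n) (Fin n) ℂ) :=
      aux_diag_unitary α p hα (fun i => (hp i).1) (fun i => (hp i).2.1) horth hsum
    have hwu : star u * (∑ i, α i • p i) ∈ unitary C(Y, Matrix (Fin n) (Fin n) ℂ) :=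
      mul_mem (Unitary.star_mem hu) hvu
    have hw1 : ‖1 - star u * (∑ i, α i • p i)‖ < 1 := by
      have he : 1 - star u * (∑ i, α i • p i) = star u * (u - ∑ i, α i • p i) := by
        rw [mul_sub, (Unitary.mem_iff.mp hu).1]
      rw [he, CStarRing.norm_mem_unitary_mul _ (Unitary.star_mem hu)]
      exact hcon
    obtain ⟨U1, hU1c, hU1u, hU10, hU11⟩ := aux_unitary_path_of_norm_lt hwu hw1
    have path1 : ∃ U : ℝ → C(Y, Matrix (Fin n) (Fin n) ℂ),
        ContinuousOn U (Set.Icc 0 1) ∧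
        (∀ t ∈ Set.Icc (0:ℝ) 1, U t ∈ unitary C(Y, Matrix (Fin n) (Fin n) ℂ)) ∧
        U 0 = u ∧ U 1 = (∑ i, α i • p i) := by
      refine ⟨fun t => u * U1 t, continuousOn_const.mul hU1c,
        fun t ht => mul_mem hu (hU1u t ht), ?_, ?_⟩
      · show u * U1 0 = u
        rw [hU10, mul_one]
      · show u * U1 1 = _
        rw [hU11, ← mul_assoc, (Unitary.mem_iff.mp hu).2, one_mul]
    choose W hWc hWu hW0 hW1 using fun i => hY (α i) (hα i)
    have path2 : ∃ U : ℝ → C(Y, Matrix (Fin n) (Fin n) ℂ),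
        ContinuousOn U (Set.Icc 0 1) ∧
        (∀ t ∈ Set.Icc (0:ℝ) 1, U t ∈ unitary C(Y, Matrix (Fin n) (Fin n) ℂ)) ∧
        U 0 = (∑ i, α i • p i) ∧ U 1 = 1 := by
      refine ⟨fun t => ∑ i, W i t • p i, ?_, ?_, ?_, ?_⟩
      · apply continuousOn_finset_sum
        intro i _
        have hL : LipschitzWith ‖p i‖₊ (fun f : C(Y, ℂ) => f • p i) := by
          apply LipschitzWith.of_dist_le_mul
          intro f g
          rw [dist_eq_norm, dist_eq_norm, mul_comm]
          have hsub : f • p i - g • p i = (f - g) • p i := by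
            ext y
            simp only [ContinuousMap.sub_apply, ContinuousMap.smul_apply', sub_smul]
          rw [hsub]
          refine (ContinuousMap.norm_le _ (by positivity)).mpr fun y => ?_
          rw [ContinuousMap.smul_apply', norm_smul]
          exact mul_le_mul (ContinuousMap.norm_coe_le_norm _ y)
            (ContinuousMap.norm_coe_le_norm _ y) (norm_nonneg _) (norm_nonneg _)
        exact hL.continuous.comp_continuousOn (hWc i)
      · intro t ht
        exact aux_diag_unitary (fun i => W i t) p (fun i => hWu i t ht)
          (fun i => (hp i).1) (fun i => (hp i).2.1) horth hsum
      · show (∑ i, W i 0 • p i) = ∑ i, α i • p i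
        exact Finset.sum_congr rfl fun i _ => by rw [hW0]
      · show (∑ i, W i 1 • p i) = 1
        calc (∑ i, W i 1 • p i) = ∑ i, p i :=
              Finset.sum_congr rfl fun i _ => by rw [hW1, one_smul]
        _ = 1 := hsum
    exact hu0 (aux_path_trans path1 path2)
end
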